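/- arXiv:1405.2224 — 3 statements merged into one kernel-verified Lean document; each statement's English description precedes it below -/
import Mathlib

section
/- In a triangle ABC with cevian AD from vertex A to a point D strictly between B and C, if (AB + BD)(AC − CD) = AD², then AD bisects angle BAC. -/
/-!
Stewart's theorem for the cevian, `AB²·CD + AC²·BD = BC·(AD² + BD·CD)`, turns the hypothesis
into `(AC·BD − AB·CD)(AB + BC − AC) = 0`. The second factor is positive by the strict triangle
inequality, so `AB : AC = BD : DC`, and by the converse of the angle bisector theorem `AD`
bisects the angle at `A`.
-/

open EuclideanGeometry

variable {V P : Type*} [NormedAddCommGroup V] [InnerProductSpace ℝ V] [MetricSpace P]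
  [NormedAddTorsor V P]

theorem dist_sq_mul_dist_add_dist_sq_mul_dist_of_sbtw (a : P) {b c d : P} (hd : Sbtw ℝ b d c) :
    dist a b ^ 2 * dist c d + dist a c ^ 2 * dist b d =
      (dist b d + dist c d) * (dist a d ^ 2 + dist b d * dist c d) := by
  have hbc : dist b d + dist c d = dist b c := by rw [dist_comm c d, hd.wbtw.dist_add_dist]
  rw [hbc]
  exact dist_sq_mul_dist_add_dist_sq_mul_dist a b c d hd.angle₁₂₃_eq_pi

theorem dist_mul_dist_eq_of_sbtw_of_mul_eq_sq {a b c d : P} (hd : Sbtw ℝ b d c)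
    (habc : ¬ Wbtw ℝ a b c)
    (h : (dist a b + dist b d) * (dist a c - dist c d) = dist a d ^ 2) :
    dist a c * dist b d = dist a b * dist c d := by
  have hstewart := dist_sq_mul_dist_add_dist_sq_mul_dist_of_sbtw a hd
  have htri : dist a c < dist a b + (dist b d + dist c d) := by
    rw [dist_comm c d, hd.wbtw.dist_add_dist]
    exact dist_lt_dist_add_dist_iff.2 habc
  have hfac : (dist a c * dist b d - dist a b * dist c d) *
      (dist a b + (dist b d + dist c d) - dist a c) = 0 := by
    linear_combination (dist b d + dist c d) * h - hstewart
  exact sub_eq_zero.1 <| (mul_eq_zero.1 hfac).resolve_right (by linarith)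

theorem angle_eq_angle_of_sbtw_of_dist_mul_dist_eq {a b c d : P} (hd : Sbtw ℝ b d c)
    (h : dist a c * dist b d = dist a b * dist c d) :
    ∠ b a d = ∠ d a c := by
  rcases eq_or_ne a d with rfl | had
  · simp
  have had' : 0 < dist a d := dist_pos.2 had
  have hm : 0 < dist b d := dist_pos.2 hd.left_ne
  have hn : 0 < dist c d := dist_pos.2 hd.ne_right.symm
  have hab : 0 < dist a b := by
    refine dist_pos.2 fun hab => hd.left_ne_right ?_
    subst hab
    simpa [hm.ne'] using h
  have hac : 0 < dist a c := by
    refine dist_pos.2 fun hac => hd.left_ne_right ?_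
    subst hac
    simpa [had'.ne', eq_comm] using h.symm
  have hstewart := dist_sq_mul_dist_add_dist_sq_mul_dist_of_sbtw a hd
  have hlength : dist a d ^ 2 + dist b d * dist c d = dist a b * dist a c := by
    refine mul_left_cancel₀ (add_pos hm hn).ne' ?_
    linear_combination -hstewart + (dist a c - dist a b) * h
  have hcos_bad := law_cos b a d
  have hcos_dac := law_cos d a c
  rw [dist_comm b a, dist_comm d a] at hcos_bad
  rw [dist_comm d a, dist_comm c a, dist_comm d c] at hcos_dac
  have hcos : Real.cos (∠ b a d) = Real.cos (∠ d a c) := by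
    refine mul_left_cancel₀ (by positivity : 2 * dist a b * dist a c * dist a d ≠ 0) ?_
    linear_combination dist a c * hcos_bad - dist a b * hcos_dac
      + (dist a c - dist a b) * hlength - (dist b d + dist c d) * h
  exact Real.injOn_cos ⟨angle_nonneg _ _ _, angle_le_pi _ _ _⟩
    ⟨angle_nonneg _ _ _, angle_le_pi _ _ _⟩ hcos

/-- If in triangle `ABC`, with `D` strictly between `B` and `C`, the cevian `AD` satisfies
`(AB + BD)(AC − CD) = AD²`, then `AD` bisects the angle `BAC`. -/
theorem product_eq_implies_bisector
    (A B C D : EuclideanSpace ℝ (Fin 2))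
    (hABC : AffineIndependent ℝ ![A, B, C])
    (hD : Sbtw ℝ B D C)
    (hprod : (dist A B + dist B D) * (dist A C - dist C D) = dist A D ^ 2) :
    ∠ B A D = ∠ D A C := by
  have hncol : ¬ Collinear ℝ {A, B, C} := affineIndependent_iff_not_collinear_set.1 hABC
  have hnotWbtw : ¬ Wbtw ℝ A B C := fun h => hncol h.collinear
  exact angle_eq_angle_of_sbtw_of_dist_mul_dist_eq hD
    (dist_mul_dist_eq_of_sbtw_of_mul_eq_sq hD hnotWbtw hprod)
end

section
/- Let F₁ = (−c,0), F₂ = (c,0) be the common foci of a confocal ellipse and hyperbola satisfying αa = c², and let C = (c, b²/a) be their upper intersection. Let a ray from F₁ with positive slope meet the ellipse at A and the right branch of the hyperbola at B. Then the angles ∠AF₂C and ∠BF₂C are equal. -/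
/-!
The projective involution `(x, y) ↦ (c²/x, c y/x)` fixes `F₁ = (-c, 0)`, maps every line through
`F₁` to itself and, because `αa = c²`, maps the hyperbola into the ellipse. Since `F₁` lies inside
the ellipse, a ray from `F₁` meets the ellipse only once, so `A` is the image of `B`. Then
`A - F₂ = (c/x_B) • (c - x_B, y_B)` is a positive multiple of the mirror image of `B - F₂` in the
line `F₂C`, hence makes the same angle with `F₂C`.
-/

open EuclideanGeometry

noncomputable def pt (x y : ℝ) : EuclideanSpace ℝ (Fin 2) :=
  (WithLp.equiv 2 (Fin 2 → ℝ)).symm ![x, y]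

lemma pt_vsub_pt (x y x' y' : ℝ) : pt x y -ᵥ pt x' y' = pt (x - x') (y - y') := by
  ext i; fin_cases i <;> simp [pt]

lemma smul_pt (r x y : ℝ) : r • pt x y = pt (r * x) (r * y) := by
  ext i; fin_cases i <;> simp [pt]

lemma inner_pt (x y x' y' : ℝ) : inner ℝ (pt x y) (pt x' y') = x * x' + y * y' := by
  simp only [pt, WithLp.equiv_symm_apply, PiLp.inner_apply, RCLike.inner_apply,
    Real.ringHom_apply, Fin.sum_univ_two, Matrix.cons_val_zero, Matrix.cons_val_one]
  ring

lemma norm_pt (x y : ℝ) : ‖pt x y‖ = √(x ^ 2 + y ^ 2) := by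
  simp [pt, EuclideanSpace.norm_eq, Fin.sum_univ_two, sq_abs]

lemma angle_pt_reflect (x y u v w : ℝ) :
    ∠ (pt (2 * u - x) y) (pt u v) (pt u w) = ∠ (pt x y) (pt u v) (pt u w) := by
  simp only [EuclideanGeometry.angle, InnerProductGeometry.angle, pt_vsub_pt, inner_pt, norm_pt]
  ring_nf

lemma eq_of_quadratic_eq_zero_of_nonneg {p q r s t : ℝ} (hp : 0 ≤ p) (hr : r < 0) (hs : 0 ≤ s)
    (ht : 0 ≤ t) (hs₀ : p * s ^ 2 + q * s + r = 0) (ht₀ : p * t ^ 2 + q * t + r = 0) :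
    s = t := by
  by_contra hne
  have hfac : (s - t) * (p * (s + t) + q) = 0 := by linear_combination hs₀ - ht₀
  have hsum := (mul_eq_zero.mp hfac).resolve_left (sub_ne_zero.mpr hne)
  have hprod : r = p * (s * t) := by linear_combination hs₀ - s * hsum
  linarith [mul_nonneg hp (mul_nonneg hs ht)]

lemma ellipse_ray_unique {a b c k x₁ y₁ x₂ y₂ : ℝ} (hb : b ≠ 0) (hca : c ^ 2 < a ^ 2)
    (h₁ : x₁ ^ 2 / a ^ 2 + y₁ ^ 2 / b ^ 2 = 1) (h₂ : x₂ ^ 2 / a ^ 2 + y₂ ^ 2 / b ^ 2 = 1)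
    (hy₁ : y₁ = k * (x₁ + c)) (hy₂ : y₂ = k * (x₂ + c)) (hx₁ : -c ≤ x₁) (hx₂ : -c ≤ x₂) :
    x₁ = x₂ := by
  have ha : a ≠ 0 := by rintro rfl; nlinarith
  field_simp at h₁ h₂
  subst hy₁ hy₂
  have := eq_of_quadratic_eq_zero_of_nonneg (p := b ^ 2 + a ^ 2 * k ^ 2) (q := -2 * b ^ 2 * c)
    (r := b ^ 2 * (c ^ 2 - a ^ 2)) (s := x₁ + c) (t := x₂ + c) (by positivity)
    (mul_neg_of_pos_of_neg (by positivity) (by linarith)) (by linarith) (by linarith)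
    (by linear_combination h₁) (by linear_combination h₂)
  linarith

lemma ellipse_of_hyperbola {a b α β c x y : ℝ} (hb : b ≠ 0) (hα : α ≠ 0) (hβ : β ≠ 0)
    (hc : c ≠ 0) (hx : x ≠ 0) (hce : c ^ 2 = a ^ 2 - b ^ 2) (hch : c ^ 2 = α ^ 2 + β ^ 2)
    (hαa : α * a = c ^ 2) (h : x ^ 2 / α ^ 2 - y ^ 2 / β ^ 2 = 1) :
    (c ^ 2 / x) ^ 2 / a ^ 2 + (c * y / x) ^ 2 / b ^ 2 = 1 := by
  have ha : a ≠ 0 := by rintro rfl; exact hc (by simpa using hαa.symm)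
  have hαb : α ^ 2 * b ^ 2 = c ^ 2 * β ^ 2 := by
    linear_combination α ^ 2 * hce + c ^ 2 * hch + (α * a + c ^ 2) * hαa
  field_simp at h ⊢
  have hxy : α ^ 2 * b ^ 2 + c ^ 2 * y ^ 2 = b ^ 2 * x ^ 2 := by
    apply mul_left_cancel₀ (pow_ne_zero 2 hβ)
    linear_combination -b ^ 2 * h - y ^ 2 * hαb
  linear_combination a ^ 2 * hxy - b ^ 2 * (α * a + c ^ 2) * hαa

theorem angle_ellipse_eq_angle_hyperbola_general
    (a b α β c k xA yA xB yB : ℝ)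
    (hb : 0 < b) (hα : 0 < α) (hβ : 0 < β) (hc : 0 < c)
    (hce : c ^ 2 = a ^ 2 - b ^ 2) (hch : c ^ 2 = α ^ 2 + β ^ 2)
    (hαa : α * a = c ^ 2)
    (hAe : xA ^ 2 / a ^ 2 + yA ^ 2 / b ^ 2 = 1)
    (hAr : yA = k * (xA + c)) (hAx : -c ≤ xA)
    (hBh : xB ^ 2 / α ^ 2 - yB ^ 2 / β ^ 2 = 1)
    (hBr : yB = k * (xB + c)) (hBx : α ≤ xB) :
    ∠ (pt xA yA) (pt c 0) (pt c (b ^ 2 / a)) =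
    ∠ (pt xB yB) (pt c 0) (pt c (b ^ 2 / a)) := by
  have hxB : 0 < xB := hα.trans_le hBx
  have himage_ellipse := ellipse_of_hyperbola hb.ne' hα.ne' hβ.ne' hc.ne' hxB.ne' hce hch hαa hBh
  have himage_ray : c * yB / xB = k * (c ^ 2 / xB + c) := by rw [hBr]; field_simp; ring
  have hxA : xA = c ^ 2 / xB :=
    ellipse_ray_unique hb.ne' (by linarith [pow_pos hb 2]) hAe himage_ellipse hAr himage_ray hAx
      (by linarith [show 0 < c ^ 2 / xB by positivity])
  have hyA : yA = c * yB / xB := by rw [hAr, himage_ray, hxA]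
  rw [← angle_pt_reflect xB yB c 0 (b ^ 2 / a)]
  refine angle_smul_left_of_pos _ (div_pos hc hxB) ?_
  rw [pt_vsub_pt, pt_vsub_pt, smul_pt, hxA, hyA]
  congr 1 <;> field_simp <;> ring

/-- For the confocal ellipse and hyperbola with foci `F₁ = (−c,0)`, `F₂ = (c,0)` and
`αa = c²`, with `C = (c, b²/a)` the upper intersection of the two curves: if a ray from
`F₁` with positive slope `k` meets the ellipse at `A` and the right branch of the hyperbola
at `B`, then the angles `∠AF₂C` and `∠BF₂C` are equal. -/
theorem angle_ellipse_eq_angle_hyperbola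
    (a b α β c k xA yA xB yB : ℝ)
    (hb : 0 < b) (hab : b < a) (hα : 0 < α) (hβ : 0 < β) (hc : 0 < c)
    (hce : c ^ 2 = a ^ 2 - b ^ 2) (hch : c ^ 2 = α ^ 2 + β ^ 2)
    (hαa : α * a = c ^ 2) (hk : 0 < k)
    (hAe : xA ^ 2 / a ^ 2 + yA ^ 2 / b ^ 2 = 1)
    (hAr : yA = k * (xA + c)) (hAx : -c ≤ xA)
    (hBh : xB ^ 2 / α ^ 2 - yB ^ 2 / β ^ 2 = 1)
    (hBr : yB = k * (xB + c)) (hBx : α ≤ xB) :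
    ∠ (pt xA yA) (pt c 0) (pt c (b ^ 2 / a)) =
    ∠ (pt xB yB) (pt c 0) (pt c (b ^ 2 / a)) :=
  angle_ellipse_eq_angle_hyperbola_general a b α β c k xA yA xB yB hb hα hβ hc hce hch hαa hAe hAr
    hAx hBh hBr hBx
end

section
/- Let A be the intersection of the ray y = k(x+c), x ≥ −c, k > 0, with the upper half of the ellipse x²/a² + y²/b² = 1 (a = κc, b = c√(κ²−1), 1 < κ < 2). Then |F₁A| < |F₁F₂| = 2c if and only if k > k_min = (κ−1)√(4−(κ−1)²)/(2−(κ−1)²). -/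
/-! A point `(x, y)` of the ellipse lies at distance `a + c x / a` from the focus `(-c, 0)`. On
the ray of slope `k` from that focus this becomes the polar equation `r (a s - c) = b² s` with
`s = √(1 + k²)`, so for `a = κ c`, `b² = c² (κ² - 1)` the inequality `r < 2c` reduces to
`2 < (2 - (κ - 1)²) s`. Squaring turns this into a bound on `k²`, and
`4 - (2 - t²)² = t² (4 - t²)` puts it in the stated form. -/

theorem focal_radius_eq_of_mem_ellipse {a b c x y : ℝ} (ha : 0 < a) (hb : b ≠ 0)
    (habc : a ^ 2 = b ^ 2 + c ^ 2) (h : x ^ 2 / a ^ 2 + y ^ 2 / b ^ 2 = 1) :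
    √((x + c) ^ 2 + y ^ 2) = a + c * x / a := by
  have hx : |x| ≤ a := by
    refine abs_le_of_sq_le_sq ?_ ha.le
    have : x ^ 2 / a ^ 2 ≤ 1 := by linarith [div_nonneg (sq_nonneg y) (sq_nonneg b)]
    rwa [div_le_one (by positivity)] at this
  have hc : |c| ≤ a := abs_le_of_sq_le_sq (by nlinarith) ha.le
  have hcx : -(c * x) ≤ a * a :=
    (neg_le_abs _).trans ((abs_mul c x).trans_le (mul_le_mul hc hx (abs_nonneg x) ha.le))
  have hnonneg : 0 ≤ a + c * x / a := by
    rw [show a + c * x / a = (a * a + c * x) / a by field_simp]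
    exact div_nonneg (by linarith) ha.le
  have hy : a ^ 2 * y ^ 2 = (a ^ 2 - x ^ 2) * (a ^ 2 - c ^ 2) := by
    field_simp at h
    linear_combination h - (a ^ 2 - x ^ 2) * habc
  rw [← Real.sqrt_sq hnonneg]
  congr 1
  field_simp
  linear_combination hy

theorem sqrt_sq_add_mul_sq {u : ℝ} (hu : 0 ≤ u) (k : ℝ) :
    √(u ^ 2 + (k * u) ^ 2) = u * √(1 + k ^ 2) := by
  rw [show u ^ 2 + (k * u) ^ 2 = u ^ 2 * (1 + k ^ 2) by ring, Real.sqrt_mul (sq_nonneg u),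
    Real.sqrt_sq hu]

theorem focal_radius_mul_eq_of_mem_ellipse {a b c k x y : ℝ} (ha : 0 < a) (hb : b ≠ 0)
    (habc : a ^ 2 = b ^ 2 + c ^ 2) (h : x ^ 2 / a ^ 2 + y ^ 2 / b ^ 2 = 1)
    (hx : 0 < x + c) (hy : y = k * (x + c)) :
    √((x + c) ^ 2 + y ^ 2) * (a * √(1 + k ^ 2) - c) = b ^ 2 * √(1 + k ^ 2) := by
  have hray : √((x + c) ^ 2 + y ^ 2) = (x + c) * √(1 + k ^ 2) := by
    rw [hy]; exact sqrt_sq_add_mul_sq hx.le k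
  have hfocal : √((x + c) ^ 2 + y ^ 2) * a = a ^ 2 + c * x := by
    rw [focal_radius_eq_of_mem_ellipse ha hb habc h]; field_simp
  linear_combination √(1 + k ^ 2) * hfocal - c * hray + √(1 + k ^ 2) * habc

theorem two_lt_mul_sqrt_one_add_sq_iff {d k : ℝ} (hd : 0 < d) (hk : 0 < k) :
    2 < d * √(1 + k ^ 2) ↔ √(4 - d ^ 2) / d < k := by
  rw [div_lt_iff₀ hd, Real.sqrt_lt' (by positivity),
    show d * √(1 + k ^ 2) = √(d ^ 2 * (1 + k ^ 2)) by
      rw [Real.sqrt_mul (sq_nonneg d), Real.sqrt_sq hd.le],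
    Real.lt_sqrt zero_le_two]
  constructor <;> intro h <;> nlinarith

theorem sqrt_four_sub_sq_two_sub_sq {t : ℝ} (ht : 0 ≤ t) :
    √(4 - (2 - t ^ 2) ^ 2) = t * √(4 - t ^ 2) := by
  rw [show 4 - (2 - t ^ 2) ^ 2 = t ^ 2 * (4 - t ^ 2) by ring, Real.sqrt_mul (sq_nonneg t),
    Real.sqrt_sq ht]

/-- Let `A = (xA, yA)` be the intersection of the ray `y = k(x+c)`, `k > 0`, with the upper
half of the ellipse `x²/a² + y²/b² = 1`, where `a = κc`, `b = c√(κ²−1)`, `1 < κ < 2`. Then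
`|F₁A| < |F₁F₂| = 2c` if and only if `k > k_min = (κ−1)√(4−(κ−1)²)/(2−(κ−1)²)`. -/
theorem focal_distance_lt_iff_slope
    (c κ a b k xA yA : ℝ) (hc : 0 < c) (hκ1 : 1 < κ) (hκ2 : κ < 2)
    (ha : a = κ * c) (hb : b = c * Real.sqrt (κ ^ 2 - 1)) (hk : 0 < k)
    (hA : xA ^ 2 / a ^ 2 + yA ^ 2 / b ^ 2 = 1)
    (hAr : yA = k * (xA + c)) (hAy : 0 < yA) :
    Real.sqrt ((xA + c) ^ 2 + yA ^ 2) < 2 * c ↔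
      (κ - 1) * Real.sqrt (4 - (κ - 1) ^ 2) / (2 - (κ - 1) ^ 2) < k := by
  have hb2 : b ^ 2 = c ^ 2 * (κ ^ 2 - 1) := by
    rw [hb, mul_pow, Real.sq_sqrt (by nlinarith)]
  have hb0 : b ≠ 0 := by
    rw [← sq_pos_iff, hb2]; exact mul_pos (by positivity) (by nlinarith)
  have ha0 : 0 < a := by rw [ha]; positivity
  have hx : 0 < xA + c := pos_of_mul_pos_right (hAr ▸ hAy) hk.le
  have hpolar := focal_radius_mul_eq_of_mem_ellipse ha0 hb0 (by rw [ha, hb2]; ring) hA hx hAr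
  set s := √(1 + k ^ 2)
  have hs : 1 < s := Real.lt_sqrt zero_le_one |>.2 (by nlinarith)
  have hdenom : 0 < a * s - c := by rw [ha]; nlinarith
  have hexcess : 2 * c * (a * s - c) - b ^ 2 * s = c ^ 2 * ((2 - (κ - 1) ^ 2) * s - 2) := by
    rw [ha, hb2]; ring
  rw [← sqrt_four_sub_sq_two_sub_sq (by linarith : 0 ≤ κ - 1),
    ← two_lt_mul_sqrt_one_add_sq_iff (by nlinarith) hk, ← mul_lt_mul_iff_left₀ hdenom, hpolar,
    ← sub_pos, hexcess, mul_pos_iff_of_pos_left (by positivity), sub_pos]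
end
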